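/- Let G = {G^L | G^R} be a short dicotic game, let A be a left option of G, and let B be a right option of A with B ≼ G (mod D⁻) (so A is reversible through B). If the set B^L of left options of B is non-empty, then G = {(G^L \ {A}) ∪ B^L | G^R} (mod D⁻). -/

import Mathlib

namespace SetTheory

universe u

/-- The type of pre-games (as in Mathlib of December 2024, since removed from Mathlib). -/
inductive PGame : Type (u + 1)
  | mk : ∀ α β : Type u, (α → PGame) → (β → PGame) → PGame

namespace PGame

def LeftMoves : PGame → Type u
  | mk l _ _ _ => l

def RightMoves : PGame → Type u
  | mk _ r _ _ => r

def moveLeft : ∀ g : PGame, LeftMoves g → PGame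
  | mk _l _ L _ => L

def moveRight : ∀ g : PGame, RightMoves g → PGame
  | mk _ _r _ R => R

inductive IsOption : PGame → PGame → Prop
  | moveLeft {x : PGame} (i : x.LeftMoves) : IsOption (x.moveLeft i) x
  | moveRight {x : PGame} (i : x.RightMoves) : IsOption (x.moveRight i) x

set_option linter.deprecated false in
noncomputable def birthday : PGame.{u} → Ordinal.{u}
  | ⟨_, _, xL, xR⟩ =>
    max (Ordinal.lsub.{u, u} fun i => birthday (xL i)) (Ordinal.lsub.{u, u} fun i => birthday (xR i))

set_option linter.deprecated false in
theorem birthday_moveLeft_lt {x : PGame} (i : x.LeftMoves) :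
    (x.moveLeft i).birthday < x.birthday := by
  cases x; rw [birthday]; exact lt_max_of_lt_left (Ordinal.lt_lsub _ i)

set_option linter.deprecated false in
theorem birthday_moveRight_lt {x : PGame} (i : x.RightMoves) :
    (x.moveRight i).birthday < x.birthday := by
  cases x; rw [birthday]; exact lt_max_of_lt_right (Ordinal.lt_lsub _ i)

def Identical : PGame.{u} → PGame.{u} → Prop
  | mk _ _ xL xR, mk _ _ yL yR =>
    Relator.BiTotal (fun i j ↦ Identical (xL i) (yL j)) ∧
      Relator.BiTotal (fun i j ↦ Identical (xR i) (yR j))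

instance : Zero PGame :=
  ⟨⟨PEmpty, PEmpty, PEmpty.elim, PEmpty.elim⟩⟩

def star : PGame.{u} :=
  ⟨PUnit, PUnit, fun _ => 0, fun _ => 0⟩

def neg : PGame → PGame
  | ⟨l, r, L, R⟩ => ⟨r, l, fun i => neg (R i), fun i => neg (L i)⟩

instance : Neg PGame :=
  ⟨neg⟩

noncomputable instance : Add PGame.{u} :=
  ⟨fun x y => by
    induction x generalizing y with | mk xl xr _ _ IHxl IHxr => _
    induction y with | mk yl yr yL yR IHyl IHyr => _
    refine ⟨xl ⊕ yl, xr ⊕ yr, Sum.rec ?_ ?_, Sum.rec ?_ ?_⟩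
    · exact fun i => IHxl i (mk yl yr yL yR)
    · exact fun i => IHyl i
    · exact fun i => IHxr i (mk yl yr yL yR)
    · exact fun i => IHyr i⟩

end PGame

end SetTheory

open SetTheory PGame

namespace MisereDicot

def Follower (G' G : PGame) : Prop := Relation.ReflTransGen PGame.IsOption G' G

def IsShort (G : PGame) : Prop :=
  ∀ G', Follower G' G → Finite G'.LeftMoves ∧ Finite G'.RightMoves

def Dicot (G : PGame) : Prop :=
  ∀ G', Follower G' G → (IsEmpty G'.LeftMoves ↔ IsEmpty G'.RightMoves)

mutual
def LeftWinsFirst (G : PGame) : Prop :=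
  IsEmpty G.LeftMoves ∨ ∃ i, ¬ RightWinsFirst (G.moveLeft i)
termination_by G.birthday
decreasing_by exact PGame.birthday_moveLeft_lt i

def RightWinsFirst (G : PGame) : Prop :=
  IsEmpty G.RightMoves ∨ ∃ j, ¬ LeftWinsFirst (G.moveRight j)
termination_by G.birthday
decreasing_by exact PGame.birthday_moveRight_lt j
end

inductive MOutcome : Type
  | L | N | P | R
deriving DecidableEq

instance : LE MOutcome := ⟨fun a b => a = b ∨ a = .R ∨ b = .L⟩

noncomputable def outcome (G : PGame) : MOutcome := by
  classical
  exact if LeftWinsFirst G then (if RightWinsFirst G then .N else .L)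
        else (if RightWinsFirst G then .R else .P)

def Dge (G H : PGame) : Prop :=
  ∀ X : PGame, IsShort X → Dicot X → outcome (H + X) ≤ outcome (G + X)

def Deq (G H : PGame) : Prop :=
  ∀ X : PGame, IsShort X → Dicot X → outcome (G + X) = outcome (H + X)

def Dgt (G H : PGame) : Prop := Dge G H ∧ ¬ Deq G H

def DInvertible (G : PGame) : Prop :=
  ∃ H : PGame, IsShort H ∧ Dicot H ∧ Deq (G + H) 0

/-- The left option `G^L_i` is reversible through its right option `(G^L_i)^R_j ≼ G`. -/
def LeftReversibleAt (G : PGame) (i : G.LeftMoves) (j : (G.moveLeft i).RightMoves) : Prop :=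
  Dge G ((G.moveLeft i).moveRight j)

def RightReversibleAt (G : PGame) (j : G.RightMoves) (i : (G.moveRight j).LeftMoves) : Prop :=
  Dge ((G.moveRight j).moveLeft i) G

/-- `G` has a dominated left option (removable by the Domination theorem). -/
def LeftDominated (G : PGame) : Prop :=
  ∃ i i' : G.LeftMoves, ¬ (G.moveLeft i).Identical (G.moveLeft i') ∧
    Dge (G.moveLeft i') (G.moveLeft i)

def RightDominated (G : PGame) : Prop :=
  ∃ j j' : G.RightMoves, ¬ (G.moveRight j).Identical (G.moveRight j') ∧
    Dge (G.moveRight j) (G.moveRight j')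

/-- `G` has a non-atomic reversible left option (bypassable). -/
def LeftNonAtomicReversible (G : PGame) : Prop :=
  ∃ i j, LeftReversibleAt G i j ∧ Nonempty ((G.moveLeft i).moveRight j).LeftMoves

def RightNonAtomicReversible (G : PGame) : Prop :=
  ∃ j i, RightReversibleAt G j i ∧ Nonempty ((G.moveRight j).moveLeft i).RightMoves

/-- `G` has an atomic-reversible left option to which the atomic-reversibility
replacement applies nontrivially (i.e. changing the set of options): either some
other left option is a winning first move for Left (so the option is removable),
or the option is not already `*`. -/
def LeftAtomicReducible (G : PGame) : Prop :=
  ∃ i j, LeftReversibleAt G i j ∧ IsEmpty ((G.moveLeft i).moveRight j).LeftMoves ∧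
    ((∃ i', ¬ (G.moveLeft i').Identical (G.moveLeft i) ∧ ¬ RightWinsFirst (G.moveLeft i')) ∨
      ¬ (G.moveLeft i).Identical star)

def RightAtomicReducible (G : PGame) : Prop :=
  ∃ j i, RightReversibleAt G j i ∧ IsEmpty ((G.moveRight j).moveLeft i).RightMoves ∧
    ((∃ j', ¬ (G.moveRight j').Identical (G.moveRight j) ∧ ¬ LeftWinsFirst (G.moveRight j')) ∨
      ¬ (G.moveRight j).Identical star)

/-- The Substitution theorem applies to `G`: `G = {A | C}` with `A` an
atomic-reversible left option and `C` an atomic-reversible right option. -/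
def SubstitutionReducible (G : PGame) : Prop :=
  (∀ i i' : G.LeftMoves, (G.moveLeft i).Identical (G.moveLeft i')) ∧
  (∀ j j' : G.RightMoves, (G.moveRight j).Identical (G.moveRight j')) ∧
  (∃ i j, LeftReversibleAt G i j ∧ IsEmpty ((G.moveLeft i).moveRight j).LeftMoves) ∧
  (∃ j i, RightReversibleAt G j i ∧ IsEmpty ((G.moveRight j).moveLeft i).RightMoves)

/-- `G` is in canonical form: no follower admits any of the misère-dicot
simplifications (domination, non-atomic reversibility, atomic reversibility,
substitution) producing an equivalent game with a different set of options. -/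
def CanonicalForm (G : PGame) : Prop :=
  ∀ G', Follower G' G →
    ¬ (LeftDominated G' ∨ RightDominated G' ∨
       LeftNonAtomicReversible G' ∨ RightNonAtomicReversible G' ∨
       LeftAtomicReducible G' ∨ RightAtomicReducible G' ∨
       SubstitutionReducible G')

/-- The game `*2 = {0, * | 0, *}`. -/
def star2 : PGame :=
  PGame.mk Bool Bool (fun b => cond b star 0) (fun b => cond b star 0)

open Classical in
/-- The adjoint `G°` of `G`. -/
noncomputable def adjoint : PGame → PGame
  | PGame.mk l r L R =>
    if IsEmpty l ∧ IsEmpty r then star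
    else if IsEmpty l then PGame.mk r PUnit (fun j => adjoint (R j)) (fun _ => 0)
    else if IsEmpty r then PGame.mk PUnit l (fun _ => 0) (fun i => adjoint (L i))
    else PGame.mk r l (fun j => adjoint (R j)) (fun i => adjoint (L i))

/-- A universe of short games: a class closed under taking options, disjunctive
sums and conjugates. -/
structure GameUniverse where
  mem : PGame → Prop
  short_mem : ∀ G, mem G → IsShort G
  isOption_mem : ∀ G G', mem G → PGame.IsOption G' G → mem G'
  add_mem : ∀ G H, mem G → mem H → mem (G + H)
  neg_mem : ∀ G, mem G → mem (-G)

/-- `G ≽ H` modulo the universe `U`. -/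
def UGe (U : GameUniverse) (G H : PGame) : Prop :=
  ∀ X : PGame, U.mem X → outcome (H + X) ≤ outcome (G + X)

/-- `G = H` modulo the universe `U`. -/
def UEq (U : GameUniverse) (G H : PGame) : Prop :=
  ∀ X : PGame, U.mem X → outcome (G + X) = outcome (H + X)

/-- `G ≻ H` modulo the universe `U`. -/
def UGt (U : GameUniverse) (G H : PGame) : Prop := UGe U G H ∧ ¬ UEq U G H

/-- `J` is invertible in the universe `U`. -/
def UInvertible (U : GameUniverse) (J : PGame) : Prop :=
  ∃ J' : PGame, U.mem J' ∧ UEq U (J + J') 0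

/-! Both `G ≽ G'` and `G' ≽ G` are proved by induction on the dicot `X`, comparing Left's
winning first moves in `G + X` and `G' + X` (the right options agree). A winning move from `G' + X`
to `B^L + X` also wins from `B + X`, hence from `G + X` because `B ≼ G`. Conversely, if Left wins
by moving from `G + X` to `A + X`, then Right's reply to `B + X` loses, so Left wins `B + X`: either
by moving to some `B^L + X`, which is available in `G'`, or by moving to `B + X^L`, which `B ≼ G`
turns into a winning move to `G + X^L`, and the induction hypothesis into one to `G' + X^L`. -/

universe u

theorem _root_.Relator.BiTotal.isEmpty_iff {α β : Sort*} {R : α → β → Prop}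
    (h : Relator.BiTotal R) : IsEmpty α ↔ IsEmpty β :=
  ⟨fun _ => ⟨fun b => isEmptyElim (h.2 b).choose⟩, fun _ => ⟨fun a => isEmptyElim (h.1 a).choose⟩⟩

theorem leftWinsFirst_add_iff (x z : PGame.{u}) :
    LeftWinsFirst (x + z) ↔ (IsEmpty x.LeftMoves ∧ IsEmpty z.LeftMoves) ∨
      (∃ i, ¬ RightWinsFirst (x.moveLeft i + z)) ∨ ∃ k, ¬ RightWinsFirst (x + z.moveLeft k) := by
  obtain ⟨xl, xr, xL, xR⟩ := x
  obtain ⟨zl, zr, zL, zR⟩ := z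
  rw [LeftWinsFirst]
  change IsEmpty (xl ⊕ zl) ∨
    (∃ i : xl ⊕ zl, ¬ RightWinsFirst ((mk xl xr xL xR + mk zl zr zL zR).moveLeft i)) ↔ _
  rw [isEmpty_sum, Sum.exists]
  rfl

theorem rightWinsFirst_add_iff (x z : PGame.{u}) :
    RightWinsFirst (x + z) ↔ (IsEmpty x.RightMoves ∧ IsEmpty z.RightMoves) ∨
      (∃ j, ¬ LeftWinsFirst (x.moveRight j + z)) ∨ ∃ k, ¬ LeftWinsFirst (x + z.moveRight k) := by
  obtain ⟨xl, xr, xL, xR⟩ := x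
  obtain ⟨zl, zr, zL, zR⟩ := z
  rw [RightWinsFirst]
  change IsEmpty (xr ⊕ zr) ∨
    (∃ j : xr ⊕ zr, ¬ LeftWinsFirst ((mk xl xr xL xR + mk zl zr zL zR).moveRight j)) ↔ _
  rw [isEmpty_sum, Sum.exists]
  rfl

theorem leftWinsFirst_add_of_moveLeft_left {x : PGame.{u}} (z : PGame.{u}) (i : x.LeftMoves)
    (h : ¬ RightWinsFirst (x.moveLeft i + z)) : LeftWinsFirst (x + z) :=
  (leftWinsFirst_add_iff x z).2 (Or.inr (Or.inl ⟨i, h⟩))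

theorem leftWinsFirst_add_of_moveLeft_right (x : PGame.{u}) {z : PGame.{u}} (k : z.LeftMoves)
    (h : ¬ RightWinsFirst (x + z.moveLeft k)) : LeftWinsFirst (x + z) :=
  (leftWinsFirst_add_iff x z).2 (Or.inr (Or.inr ⟨k, h⟩))

theorem leftWinsFirst_moveRight_add {x z : PGame.{u}} (h : ¬ RightWinsFirst (x + z))
    (j : x.RightMoves) : LeftWinsFirst (x.moveRight j + z) :=
  not_not.1 fun hj => h ((rightWinsFirst_add_iff x z).2 (Or.inr (Or.inl ⟨j, hj⟩)))

theorem _root_.SetTheory.PGame.Identical.winsFirst_add_iff {x y : PGame.{u}} (h : x.Identical y)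
    (z : PGame.{u}) :
    (LeftWinsFirst (x + z) ↔ LeftWinsFirst (y + z)) ∧
      (RightWinsFirst (x + z) ↔ RightWinsFirst (y + z)) := by
  induction x generalizing y z with
  | mk xl xr xL xR ihL ihR =>
  obtain ⟨yl, yr, yL, yR⟩ := y
  obtain ⟨hL, hR⟩ := h
  induction z with
  | mk zl zr zL zR ihzL ihzR =>
  rw [leftWinsFirst_add_iff, leftWinsFirst_add_iff, rightWinsFirst_add_iff, rightWinsFirst_add_iff]
  refine ⟨or_congr (and_congr_left' hL.isEmpty_iff) (or_congr ?_ ?_),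
    or_congr (and_congr_left' hR.isEmpty_iff) (or_congr ?_ ?_)⟩
  · exact hL.rel_exists fun i j hij => not_congr (ihL i hij _).2
  · exact exists_congr fun k => not_congr (ihzL k).2
  · exact hR.rel_exists fun i j hij => not_congr (ihR i hij _).1
  · exact exists_congr fun k => not_congr (ihzR k).1

theorem IsShort.moveLeft {x : PGame.{u}} (h : IsShort x) (i : x.LeftMoves) :
    IsShort (x.moveLeft i) :=
  fun z hz => h z (hz.tail (.moveLeft i))

theorem IsShort.moveRight {x : PGame.{u}} (h : IsShort x) (j : x.RightMoves) :
    IsShort (x.moveRight j) :=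
  fun z hz => h z (hz.tail (.moveRight j))

theorem Dicot.moveLeft {x : PGame.{u}} (h : Dicot x) (i : x.LeftMoves) : Dicot (x.moveLeft i) :=
  fun z hz => h z (hz.tail (.moveLeft i))

theorem Dicot.moveRight {x : PGame.{u}} (h : Dicot x) (j : x.RightMoves) :
    Dicot (x.moveRight j) :=
  fun z hz => h z (hz.tail (.moveRight j))

theorem outcome_le_outcome_iff {g h : PGame.{u}} :
    outcome h ≤ outcome g ↔
      (LeftWinsFirst h → LeftWinsFirst g) ∧ (RightWinsFirst g → RightWinsFirst h) := by
  classical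
  unfold outcome
  by_cases h1 : LeftWinsFirst h <;> by_cases h2 : RightWinsFirst h <;>
    by_cases h3 : LeftWinsFirst g <;> by_cases h4 : RightWinsFirst g <;>
    simp [h1, h2, h3, h4, LE.le]

theorem MOutcome.le_antisymm {a b : MOutcome} (hab : a ≤ b) (hba : b ≤ a) : a = b := by
  cases a <;> cases b <;> simp_all [LE.le]

theorem Deq.of_dge_of_dge {G H : PGame.{u}} (hGH : Dge G H) (hHG : Dge H G) : Deq G H :=
  fun X hs hd => MOutcome.le_antisymm (hHG X hs hd) (hGH X hs hd)

/-- The alternative `∃ k, …` is enough: by induction on `X`, a winning move from `H + X` to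
`H + X^L` also wins from `G + X` to `G + X^L`. -/
theorem dge_mk_of_moveLeft {gl hl xr : Type u} {gL : gl → PGame.{u}} {hL : hl → PGame.{u}}
    {xR : xr → PGame.{u}} (hne : Nonempty hl)
    (h : ∀ X, IsShort X → Dicot X → ∀ i, ¬ RightWinsFirst (hL i + X) →
      LeftWinsFirst (mk gl xr gL xR + X) ∨ ∃ k, ¬ RightWinsFirst (mk hl xr hL xR + X.moveLeft k)) :
    Dge (mk gl xr gL xR) (mk hl xr hL xR) := by
  intro X hsX hdX
  induction X with
  | mk zl zr zL zR ihL ihR =>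
  have ih_le {k : zl} : outcome (mk hl xr hL xR + zL k) ≤ outcome (mk gl xr gL xR + zL k) :=
    ihL k (hsX.moveLeft k) (hdX.moveLeft k)
  have ih_re {k : zr} : outcome (mk hl xr hL xR + zR k) ≤ outcome (mk gl xr gL xR + zR k) :=
    ihR k (hsX.moveRight k) (hdX.moveRight k)
  have move_in_X (k : zl) (hk : ¬ RightWinsFirst (mk hl xr hL xR + zL k)) :
      LeftWinsFirst (mk gl xr gL xR + mk zl zr zL zR) :=
    leftWinsFirst_add_of_moveLeft_right _ k fun hG => hk ((outcome_le_outcome_iff.1 ih_le).2 hG)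
  rw [outcome_le_outcome_iff]
  constructor
  · intro hHX
    rcases (leftWinsFirst_add_iff _ _).1 hHX with ⟨hempty, -⟩ | ⟨i, hi⟩ | ⟨k, hk⟩
    · exact (hempty.false hne.some).elim
    · exact (h _ hsX hdX i hi).elim id fun ⟨k, hk⟩ => move_in_X k hk
    · exact move_in_X k hk
  · rw [rightWinsFirst_add_iff, rightWinsFirst_add_iff]
    rintro (hempty | hj | ⟨k, hk⟩)
    · exact Or.inl hempty
    · exact Or.inr (Or.inl hj)
    · exact Or.inr (Or.inr ⟨k, fun hH => hk ((outcome_le_outcome_iff.1 ih_re).1 hH)⟩)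

/-- Non-atomic reversibility: if the left option `A = xL iA` of `G`
is reversible through its right option `B` with `B^L` non-empty, then
`G = {(G^L \\ {A}) ∪ B^L | G^R}` (mod `D⁻`). -/
theorem stmt10 (xl xr : Type) (xL : xl → PGame) (xR : xr → PGame)
    (hs : IsShort (PGame.mk xl xr xL xR)) (hd : Dicot (PGame.mk xl xr xL xR))
    (iA : xl) (j : (xL iA).RightMoves)
    (hrev : Dge (PGame.mk xl xr xL xR) ((xL iA).moveRight j))
    (hBL : Nonempty ((xL iA).moveRight j).LeftMoves) :
    Deq (PGame.mk xl xr xL xR)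
      (PGame.mk ({i : xl // ¬ (xL i).Identical (xL iA)} ⊕ ((xL iA).moveRight j).LeftMoves) xr
        (Sum.elim (fun i => xL i.1) (fun k => ((xL iA).moveRight j).moveLeft k)) xR) := by
  have B_le {X} (hsX : IsShort X) (hdX : Dicot X) := outcome_le_outcome_iff.1 (hrev X hsX hdX)
  refine Deq.of_dge_of_dge (dge_mk_of_moveLeft (hBL.map Sum.inr) ?_) (dge_mk_of_moveLeft ⟨iA⟩ ?_)
  · rintro X hsX hdX (⟨i, _⟩ | k) hwin
    · exact Or.inl (leftWinsFirst_add_of_moveLeft_left X i hwin)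
    · exact Or.inl ((B_le hsX hdX).1 (leftWinsFirst_add_of_moveLeft_left X k hwin))
  · intro X hsX hdX i hwin
    by_cases hiA : (xL i).Identical (xL iA)
    · have hA : ¬ RightWinsFirst (xL iA + X) := fun h => hwin ((hiA.winsFirst_add_iff X).2.2 h)
      rcases (leftWinsFirst_add_iff _ X).1 (leftWinsFirst_moveRight_add hA j) with
        ⟨hempty, -⟩ | ⟨k, hk⟩ | ⟨k, hk⟩
      · exact (hempty.false hBL.some).elim
      · exact Or.inl (leftWinsFirst_add_of_moveLeft_left X (Sum.inr k) hk)
      · exact Or.inr ⟨k, fun hG => hk ((B_le (hsX.moveLeft k) (hdX.moveLeft k)).2 hG)⟩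
    · exact Or.inl (leftWinsFirst_add_of_moveLeft_left X (Sum.inl ⟨i, hiA⟩) hwin)

end MisereDicot
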